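/- Under the strong external infection regime 0 < κ < 1/(4(n-1)²) and a > 1 − 1/n^α > 1 − κ > 1/2 with α > 1 and p_* := a + λ·Δ_max < 1 with λ·Δ_max < 1/n^α, the constants satisfy γ = 1 − κ + o(1) and β = 1 − κ + o(1) as n → ∞, where γ := (1−κ)a + (1−a)κ − 2(n−1)κ(1−κ) and β := κ + p_*·(1−2κ); consequently the lower mixing-time bound (n/(2β))·(log n + log(γε/4)) is asymptotically (n/2)·(1 − o(1))·log n. -/

import Mathlib

open Filter Real

noncomputable section

/-- The contraction constant `γ` of the paper. -/
def gammaSIS (n : ℕ) (a kap : ℝ) : ℝ :=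
  (1 - kap) * a + (1 - a) * kap - 2 * ((n : ℝ) - 1) * kap * (1 - kap)

/-- The constant `β` of the paper, where `pstar = a + λ · Δ_max`. -/
def betaSIS (pstar kap : ℝ) : ℝ := kap + pstar * (1 - 2 * kap)

/-- (Asymptotics of the constants `γ` and `β` in the strong external
infection regime: `γ = 1 - κ + o(1)` and `β = 1 - κ + o(1)`, so that the mixing-time
lower bound `(n/(2β))(log n + log(γ ε / 4))` is asymptotically `(n/2)(1 - o(1)) log n`). -/
theorem noisySIS_gamma_beta_asymptotics
    (a lam kap : ℕ → ℝ) (Δ : ℕ → ℕ) (α : ℝ) (hα : 1 < α)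
    (ha : ∀ n : ℕ, 2 ≤ n → 0 < a n) (hlam : ∀ n : ℕ, 2 ≤ n → 0 < lam n)
    (hkap : ∀ n : ℕ, 2 ≤ n → 0 < kap n)
    (hkap' : ∀ n : ℕ, 2 ≤ n → kap n < 1 / (4 * ((n : ℝ) - 1) ^ 2))
    (hreg1 : ∀ n : ℕ, 2 ≤ n → 1 - 1 / (n : ℝ) ^ α < a n)
    (hreg2 : ∀ n : ℕ, 2 ≤ n → 1 - kap n < 1 - 1 / (n : ℝ) ^ α)
    (hreg3 : ∀ n : ℕ, 2 ≤ n → 1 / 2 < 1 - kap n)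
    (hpstar : ∀ n : ℕ, 2 ≤ n → a n + lam n * (Δ n : ℝ) < 1)
    (hdeg : ∀ n : ℕ, 2 ≤ n → lam n * (Δ n : ℝ) < 1 / (n : ℝ) ^ α) :
    Tendsto (fun n : ℕ => gammaSIS n (a n) (kap n) - (1 - kap n)) atTop (nhds 0) ∧
      Tendsto (fun n : ℕ =>
        betaSIS (a n + lam n * (Δ n : ℝ)) (kap n) - (1 - kap n)) atTop (nhds 0) ∧
      ∀ ε : ℝ, 0 < ε →
        Tendsto (fun n : ℕ =>
          (((n : ℝ) / (2 * betaSIS (a n + lam n * (Δ n : ℝ)) (kap n)))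
              * (Real.log n + Real.log (gammaSIS n (a n) (kap n) * ε / 4)))
            / (((n : ℝ) / 2) * Real.log n)) atTop (nhds 1) := by

  have hnat : Tendsto (fun n : ℕ => (n:ℝ)) atTop atTop := tendsto_natCast_atTop_atTop
  have hpow : Tendsto (fun n : ℕ => (n:ℝ) ^ α) atTop atTop :=
    (tendsto_rpow_atTop (by linarith)).comp hnat
  have hinvpow : Tendsto (fun n : ℕ => 1 / (n:ℝ) ^ α) atTop (nhds 0) := by
    simpa [one_div, Pi.inv_def] using hpow.inv_tendsto_atTop
  have hsub : Tendsto (fun n : ℕ => (n:ℝ) - 1) atTop atTop :=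
    tendsto_atTop_add_const_right _ _ hnat
  have hinvsub : Tendsto (fun n : ℕ => 1 / (2 * ((n:ℝ) - 1))) atTop (nhds 0) := by
    simpa [one_div, Pi.inv_def] using (hsub.const_mul_atTop (by norm_num : (0:ℝ) < 2)).inv_tendsto_atTop
  -- kap tends to 0
  have hk0 : Tendsto kap atTop (nhds 0) := by
    have hbig : Tendsto (fun n : ℕ => 4 * ((n:ℝ)-1)^2) atTop atTop := by
      have := (hsub.atTop_mul_atTop₀ hsub).const_mul_atTop (by norm_num : (0:ℝ) < 4)
      simpa [sq, mul_assoc] using this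
    have hub : Tendsto (fun n : ℕ => 1 / (4 * ((n:ℝ)-1)^2)) atTop (nhds 0) := by
      simpa [one_div, Pi.inv_def] using hbig.inv_tendsto_atTop
    refine tendsto_of_tendsto_of_tendsto_of_le_of_le' tendsto_const_nhds hub ?_ ?_
    · filter_upwards [eventually_ge_atTop 2] with n hn using (hkap n hn).le
    · filter_upwards [eventually_ge_atTop 2] with n hn using (hkap' n hn).le
  -- basic per-n facts
  have key : ∀ n : ℕ, 2 ≤ n →
      (0 < kap n ∧ kap n < 1/4 ∧ 1 - 1/(n:ℝ)^α < a n ∧ a n < 1 ∧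
       0 ≤ lam n * (Δ n : ℝ) ∧ 4 * ((n:ℝ)-1)^2 * kap n < 1 ∧ 1 ≤ (n:ℝ) - 1) := by
    intro n hn
    have hn1 : (2:ℝ) ≤ (n:ℝ) := by exact_mod_cast hn
    have hN : 1 ≤ (n:ℝ) - 1 := by linarith
    have hk := hkap n hn
    have hk' := hkap' n hn
    have hNpos : (0:ℝ) < 4 * ((n:ℝ)-1)^2 := by positivity
    have h4 : 4 * ((n:ℝ)-1)^2 * kap n < 1 := by
      rw [lt_div_iff₀ hNpos] at hk'
      linarith
    have hkq : kap n < 1/4 := by nlinarith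
    have hlamd : 0 ≤ lam n * (Δ n : ℝ) :=
      mul_nonneg (hlam n hn).le (Nat.cast_nonneg _)
    have halt : a n < 1 := by have := hpstar n hn; linarith
    exact ⟨hk, hkq, hreg1 n hn, halt, hlamd, h4, hN⟩
  -- gamma asymptotics
  have hgam : Tendsto (fun n : ℕ => gammaSIS n (a n) (kap n) - (1 - kap n)) atTop (nhds 0) := by
    have hlow : Tendsto (fun n : ℕ => -(1/(n:ℝ)^α + 1/(2*((n:ℝ)-1)))) atTop (nhds 0) := by
      have := (hinvpow.add hinvsub).neg
      simpa using this
    refine tendsto_of_tendsto_of_tendsto_of_le_of_le' hlow tendsto_const_nhds ?_ ?_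
    · filter_upwards [eventually_ge_atTop 2] with n hn
      obtain ⟨hk, hkq, ha1, ha2, _, h4, hN⟩ := key n hn
      have hNpos : (0:ℝ) < (n:ℝ) - 1 := by linarith
      have hid : gammaSIS n (a n) (kap n) - (1 - kap n)
          = (a n - 1) * (1 - 2 * kap n) - 2 * ((n:ℝ)-1) * kap n * (1 - kap n) := by
        simp only [gammaSIS]; ring
      rw [hid]
      have h1 : (a n - 1) * (1 - 2 * kap n) ≥ -(1/(n:ℝ)^α) := by nlinarith
      have h2 : 2 * ((n:ℝ)-1) * kap n * (1 - kap n) ≤ 1/(2*((n:ℝ)-1)) := by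
        rw [le_div_iff₀ (by linarith : (0:ℝ) < 2*((n:ℝ)-1))]
        nlinarith
      linarith
    · filter_upwards [eventually_ge_atTop 2] with n hn
      obtain ⟨hk, hkq, ha1, ha2, _, h4, hN⟩ := key n hn
      have hid : gammaSIS n (a n) (kap n) - (1 - kap n)
          = (a n - 1) * (1 - 2 * kap n) - 2 * ((n:ℝ)-1) * kap n * (1 - kap n) := by
        simp only [gammaSIS]; ring
      rw [hid]
      have t1 : (a n - 1) * (1 - 2 * kap n) ≤ 0 :=
        mul_nonpos_of_nonpos_of_nonneg (by linarith) (by linarith)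
      have t2 : 0 < 2 * ((n:ℝ)-1) * kap n * (1 - kap n) :=
        mul_pos (mul_pos (by linarith) hk) (by linarith)
      linarith
  -- beta asymptotics
  have hbet : Tendsto (fun n : ℕ =>
      betaSIS (a n + lam n * (Δ n : ℝ)) (kap n) - (1 - kap n)) atTop (nhds 0) := by
    have hlow : Tendsto (fun n : ℕ => -(1/(n:ℝ)^α)) atTop (nhds 0) := by
      simpa using hinvpow.neg
    refine tendsto_of_tendsto_of_tendsto_of_le_of_le' hlow tendsto_const_nhds ?_ ?_
    · filter_upwards [eventually_ge_atTop 2] with n hn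
      obtain ⟨hk, hkq, ha1, ha2, hlamd, h4, hN⟩ := key n hn
      have hp := hpstar n hn
      have hid : betaSIS (a n + lam n * (Δ n : ℝ)) (kap n) - (1 - kap n)
          = ((a n + lam n * (Δ n : ℝ)) - 1) * (1 - 2 * kap n) := by
        simp only [betaSIS]; ring
      rw [hid]
      nlinarith
    · filter_upwards [eventually_ge_atTop 2] with n hn
      obtain ⟨hk, hkq, ha1, ha2, hlamd, h4, hN⟩ := key n hn
      have hp := hpstar n hn
      have hid : betaSIS (a n + lam n * (Δ n : ℝ)) (kap n) - (1 - kap n)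
          = ((a n + lam n * (Δ n : ℝ)) - 1) * (1 - 2 * kap n) := by
        simp only [betaSIS]; ring
      rw [hid]
      nlinarith
  refine ⟨hgam, hbet, ?_⟩
  -- limits of beta and gamma to 1
  have hone : Tendsto (fun n : ℕ => 1 - kap n) atTop (nhds 1) := by
    simpa using (tendsto_const_nhds : Tendsto (fun _ : ℕ => (1:ℝ)) atTop (nhds 1)).sub hk0
  have hb1 : Tendsto (fun n : ℕ => betaSIS (a n + lam n * (Δ n : ℝ)) (kap n)) atTop (nhds 1) := by
    have := hbet.add hone
    simpa using this
  have hg1 : Tendsto (fun n : ℕ => gammaSIS n (a n) (kap n)) atTop (nhds 1) := by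
    have := hgam.add hone
    simpa using this
  intro ε hε
  have hL : Tendsto (fun n : ℕ => Real.log n) atTop atTop :=
    Real.tendsto_log_atTop.comp hnat
  have hc : Tendsto (fun n : ℕ => Real.log (gammaSIS n (a n) (kap n) * ε / 4)) atTop
      (nhds (Real.log (ε/4))) := by
    have hin : Tendsto (fun n : ℕ => gammaSIS n (a n) (kap n) * ε / 4) atTop (nhds (ε/4)) := by
      have := (hg1.mul_const ε).div_const 4
      simpa using this
    exact ((Real.continuousAt_log (by positivity)).tendsto.comp hin)
  have hcL : Tendsto (fun n : ℕ =>
      Real.log (gammaSIS n (a n) (kap n) * ε / 4) / Real.log n) atTop (nhds 0) :=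
    hc.div_atTop hL
  have hhh : Tendsto (fun n : ℕ =>
      (betaSIS (a n + lam n * (Δ n : ℝ)) (kap n))⁻¹ *
      (1 + Real.log (gammaSIS n (a n) (kap n) * ε / 4) / Real.log n)) atTop (nhds 1) := by
    have h1 : Tendsto (fun n : ℕ => (betaSIS (a n + lam n * (Δ n : ℝ)) (kap n))⁻¹) atTop
        (nhds 1) := by simpa using hb1.inv₀ one_ne_zero
    have h2 : Tendsto (fun n : ℕ =>
        (1:ℝ) + Real.log (gammaSIS n (a n) (kap n) * ε / 4) / Real.log n) atTop (nhds 1) := by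
      simpa using (tendsto_const_nhds : Tendsto (fun _ : ℕ => (1:ℝ)) atTop (nhds 1)).add hcL
    simpa using h1.mul h2
  refine Tendsto.congr' ?_ hhh
  filter_upwards [eventually_ge_atTop 3] with n hn
  have hn2 : 2 ≤ n := by omega
  obtain ⟨hk, hkq, ha1, ha2, hlamd, h4, hN⟩ := key n hn2
  have hn3 : (3:ℝ) ≤ (n:ℝ) := by exact_mod_cast hn
  have hnpos : (0:ℝ) < (n:ℝ) := by linarith
  have hLpos : 0 < Real.log n := Real.log_pos (by linarith)
  have hbpos : 0 < betaSIS (a n + lam n * (Δ n : ℝ)) (kap n) := by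
    simp only [betaSIS]
    have : 0 < a n + lam n * (Δ n : ℝ) := by
      have := ha n hn2; linarith
    nlinarith
  field_simp
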